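/- Let D ∈ ℕ, let 𝒳 ⊆ ℝ^D be a compact hyperrectangle, let xᵢ ∈ ℝ^D, ℓ₁,…,ℓ_D > 0, σ_f² > 0, and α ∈ ℝ, and let k(x) = σ_f²·exp(−rᵢ(x)²/2) with rᵢ(x) = (∑_{j=1}^D (xⱼ − xᵢⱼ)²/ℓⱼ²)^{1/2}. For a hyperrectangle X_h ⊆ 𝒳 write rᴸ(X_h) = min_{x∈X_h} rᵢ(x), rᵁ(X_h) = max_{x∈X_h} rᵢ(x), k̲ᴬ(X_h) = σ_f²·exp(−rᵁ(X_h)²/2), k̄ᴬ(X_h) = σ_f²·exp(−rᴸ(X_h)²/2), and t̲ᴬ(X_h) = α⁺·k̲ᴬ(X_h) − α⁻·k̄ᴬ(X_h), where α⁺ = max{0, α} and α⁻ = max{0, −α}. Then for every ε > 0 there exists δ > 0 such that for every nonempty hyperrectangle X_h ⊆ 𝒳 of diameter at most δ and every x ∈ X_h, 0 ≤ α·k(x) − t̲ᴬ(X_h) ≤ ε. That is, the gap between the exact signed kernel term and its sign-aware analytical lower bound vanishes uniformly as the node diameter tends to zero. -/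

import Mathlib

/-- Proposition 4, analytically treated RBF terms: the gap between the exact signed
kernel term `α · k(x)` and its sign-aware analytical lower bound
`t̲ᴬ = α⁺ k̲ᴬ − α⁻ k̄ᴬ` (built from the max/min scaled distance over the node)
vanishes uniformly over hyperrectangular nodes `Xh ⊆ 𝒳` as their diameter tends
to zero. -/
theorem rbf_analytic_gap_vanishes (D : ℕ) (a b : EuclideanSpace ℝ (Fin D))
    (hab : ∀ j, a j ≤ b j) (xi : EuclideanSpace ℝ (Fin D))
    (ℓ : Fin D → ℝ) (hl : ∀ j, 0 < ℓ j) (σf2 : ℝ) (hσ : 0 < σf2) (α : ℝ) :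
    let r : EuclideanSpace ℝ (Fin D) → ℝ :=
      fun x => Real.sqrt (∑ j, (x j - xi j) ^ 2 / (ℓ j) ^ 2)
    let k : EuclideanSpace ℝ (Fin D) → ℝ := fun x => σf2 * Real.exp (-((r x) ^ 2) / 2)
    let box : EuclideanSpace ℝ (Fin D) → EuclideanSpace ℝ (Fin D) →
        Set (EuclideanSpace ℝ (Fin D)) :=
      fun u v => {x | ∀ j, u j ≤ x j ∧ x j ≤ v j}
    let tlow : EuclideanSpace ℝ (Fin D) → EuclideanSpace ℝ (Fin D) → ℝ :=
      fun u v =>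
        max 0 α * (σf2 * Real.exp (-((sSup (r '' box u v)) ^ 2) / 2))
          - max 0 (-α) * (σf2 * Real.exp (-((sInf (r '' box u v)) ^ 2) / 2))
    ∀ ε : ℝ, 0 < ε → ∃ δ : ℝ, 0 < δ ∧
      ∀ u v : EuclideanSpace ℝ (Fin D),
        (∀ j, a j ≤ u j) → (∀ j, u j ≤ v j) → (∀ j, v j ≤ b j) →
        Metric.diam (box u v) ≤ δ →
        ∀ x ∈ box u v,
          0 ≤ α * k x - tlow u v ∧ α * k x - tlow u v ≤ ε := by
  intro r k box tlow ε hε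
  have hrc : Continuous r := by
    apply Real.continuous_sqrt.comp
    apply continuous_finset_sum
    intro j _
    exact ((PiLp.continuous_apply 2 _ j).sub continuous_const).pow 2 |>.div_const _
  have hkc : Continuous k := by
    exact continuous_const.mul ((((hrc.pow 2).neg).div_const 2).rexp)
  have hr0 : ∀ x, 0 ≤ r x := fun x => Real.sqrt_nonneg _
  have hbox : ∀ u v : EuclideanSpace ℝ (Fin D), IsCompact (box u v) := by
    intro u v
    have h : box u v = (PiLp.homeomorph 2 _) ⁻¹' Set.univ.pi (fun j => Set.Icc (u j) (v j)) := by
      ext y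
      constructor
      · intro h j _; exact Set.mem_Icc.mpr (h j)
      · intro h j; exact Set.mem_Icc.mp (h j trivial)
    rw [h]
    exact (PiLp.homeomorph 2 _).isCompact_preimage.2 (isCompact_univ_pi (fun j => isCompact_Icc))
  -- monotonicity of the kernel profile
  have hmono : ∀ s t : ℝ, 0 ≤ s → s ≤ t →
      σf2 * Real.exp (-(t ^ 2) / 2) ≤ σf2 * Real.exp (-(s ^ 2) / 2) := by
    intro s t hs hst
    have : s ^ 2 ≤ t ^ 2 := by nlinarith
    have := Real.exp_le_exp.mpr (by linarith : -(t ^ 2) / 2 ≤ -(s ^ 2) / 2)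
    nlinarith [Real.exp_pos (-(t ^ 2) / 2)]
  have hKc : IsCompact (box a b) := hbox a b
  have huc := hKc.uniformContinuousOn_of_continuous hkc.continuousOn
  obtain ⟨δ, hδ, hδ'⟩ := Metric.uniformContinuousOn_iff.mp huc (ε / (|α| + 1))
    (by positivity)
  refine ⟨δ / 2, by positivity, ?_⟩
  intro u v hau huv hvb hdiam x hx
  have hsub : box u v ⊆ box a b := by
    intro y hy j
    exact ⟨le_trans (hau j) (hy j).1, le_trans (hy j).2 (hvb j)⟩
  have hcomp := hbox u v
  have hne : (box u v).Nonempty := ⟨x, hx⟩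
  have himg : IsCompact (r '' box u v) := hcomp.image hrc
  have hineS : (r '' box u v).Nonempty := hne.image r
  obtain ⟨xM, hxM, hrM⟩ := himg.sSup_mem hineS
  obtain ⟨xm, hxm, hrm⟩ := himg.sInf_mem hineS
  have hleM : r x ≤ r xM := hrM ▸ le_csSup himg.bddAbove ⟨x, hx, rfl⟩
  have hlem : r xm ≤ r x := hrm ▸ csInf_le himg.bddBelow ⟨x, hx, rfl⟩
  -- rewrite tlow in terms of k at the extremizers
  have htlow : tlow u v = max 0 α * k xM - max 0 (-α) * k xm := by
    simp only [tlow, k, hrM, hrm]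
  -- kernel comparisons
  have hk1 : k xM ≤ k x := hmono (r x) (r xM) (hr0 x) hleM
  have hk2 : k x ≤ k xm := hmono (r xm) (r x) (hr0 xm) hlem
  -- distance estimates
  have hdxM : dist x xM < δ := by
    have := Metric.dist_le_diam_of_mem hcomp.isBounded hx hxM
    linarith
  have hdxm : dist x xm < δ := by
    have := Metric.dist_le_diam_of_mem hcomp.isBounded hx hxm
    linarith
  have hclose1 : k x - k xM < ε / (|α| + 1) := by
    have := hδ' x (hsub hx) xM (hsub hxM) hdxM
    rw [Real.dist_eq] at this
    have := abs_lt.mp this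
    linarith [this.2]
  have hclose2 : k xm - k x < ε / (|α| + 1) := by
    have h := hδ' xm (hsub hxm) x (hsub hx) (by rwa [dist_comm])
    rw [Real.dist_eq] at h
    linarith [(abs_lt.mp h).2]
  have key : ∀ c : ℝ, 0 ≤ c → c ≤ |α| → c * (ε / (|α| + 1)) ≤ ε := by
    intro c hc hcα
    have hpos : (0:ℝ) < |α| + 1 := by positivity
    calc c * (ε / (|α| + 1)) ≤ (|α| + 1) * (ε / (|α| + 1)) :=
          mul_le_mul_of_nonneg_right (by linarith) (by positivity)
      _ = ε := by rw [mul_comm]; exact div_mul_cancel₀ ε hpos.ne'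
  rw [htlow]
  rcases le_or_gt 0 α with hα | hα
  · have h1 : max 0 α = α := max_eq_right hα
    have h2 : max 0 (-α) = 0 := max_eq_left (by linarith)
    rw [h1, h2]
    constructor
    · nlinarith
    · have hfrac : α * (ε / (|α| + 1)) ≤ ε := key α hα (le_abs_self α)
      have : α * (k x - k xM) ≤ α * (ε / (|α| + 1)) :=
        mul_le_mul_of_nonneg_left (le_of_lt hclose1) hα
      nlinarith
  · have h1 : max 0 α = 0 := max_eq_left (le_of_lt hα)
    have h2 : max 0 (-α) = -α := max_eq_right (by linarith)
    rw [h1, h2]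
    constructor
    · nlinarith
    · have hfrac : (-α) * (ε / (|α| + 1)) ≤ ε :=
        key (-α) (by linarith) (neg_abs_le α |>.trans (le_abs_self α) |> fun _ => (abs_of_neg hα).ge)
      have : (-α) * (k xm - k x) ≤ (-α) * (ε / (|α| + 1)) :=
        mul_le_mul_of_nonneg_left (le_of_lt hclose2) (by linarith)
      nlinarith
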